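/- Suppose for every pair of points c ≠ c' in a compact connected set K ⊆ ℂ at least one of which is a 'landing point' (member of a fixed countable dense-in-boundary set P with trivial fibers), the points can be separated; and suppose every separation line passes only through points of P. Then the fibers of K form a partition of K; equivalently, the fibers of any two points are either equal or disjoint. -/
import Mathlib


/-- A separation line: a closed subset of `ℂ` whose complement consists of
exactly two nonempty open connected pieces. -/
def IsSepLine (γ : Set ℂ) : Prop :=
  IsClosed γ ∧ ∃ U V : Set ℂ, IsOpen U ∧ IsOpen V ∧ U.Nonempty ∧ V.Nonempty ∧
    Disjoint U V ∧ U ∪ V = γᶜ ∧ IsConnected U ∧ IsConnected V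

/-- `γ` separates `c` from `c'`: both avoid `γ` and lie in different connected
components of the complement of `γ`. -/
def Separates (γ : Set ℂ) (c c' : ℂ) : Prop :=
  c ∈ γᶜ ∧ c' ∈ γᶜ ∧
    connectedComponentIn γᶜ c ≠ connectedComponentIn γᶜ c'

/-- The fiber of `c` in `K` with respect to the family `S` of separation
lines: all points of `K` that cannot be separated from `c` by a member of
`S` (such a separating line automatically avoids both points). -/
def fiberOf (K : Set ℂ) (S : Set (Set ℂ)) (c : ℂ) : Set ℂ :=
  {c' ∈ K | ¬ ∃ γ ∈ S, Separates γ c c'}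

/-- Suppose `P ⊆ K` is a countable set of points with trivial
fibers such that every pair of distinct points of `K` at least one of which
lies in `P` can be separated, and every separation line of `S` meets `K` only
in points of `P`. Then the fibers of `K` form a partition: any two fibers are
equal or disjoint. -/
theorem fibers_partition (K : Set ℂ) (hK : IsCompact K)
    (hKconn : IsConnected K)
    (S : Set (Set ℂ)) (hS : ∀ γ ∈ S, IsSepLine γ)
    (P : Set ℂ) (hPsub : P ⊆ K) (hPcount : P.Countable)
    (hPtriv : ∀ p ∈ P, fiberOf K S p = {p})
    (hPsep : ∀ c ∈ K, ∀ c' ∈ K, c ≠ c' → (c ∈ P ∨ c' ∈ P) →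
      ∃ γ ∈ S, Separates γ c c')
    (hline : ∀ γ ∈ S, γ ∩ K ⊆ P) :
    ∀ c ∈ K, ∀ c' ∈ K,
      fiberOf K S c = fiberOf K S c' ∨
        Disjoint (fiberOf K S c) (fiberOf K S c') := by
  intro c hc c' hc'
  by_cases hdis : Disjoint (fiberOf K S c) (fiberOf K S c')
  · exact Or.inr hdis
  left
  rw [Set.not_disjoint_iff] at hdis
  obtain ⟨x, hxc, hxc'⟩ := hdis
  have symm : ∀ a b : ℂ, a ∈ K → b ∈ fiberOf K S a → a ∈ fiberOf K S b := by
    intro a b ha hb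
    obtain ⟨hbK, hbn⟩ := hb
    exact ⟨ha, fun ⟨γ, hγ, h1, h2, h3⟩ => hbn ⟨γ, hγ, h2, h1, h3.symm⟩⟩
  have trans : ∀ a b d : ℂ, b ∈ fiberOf K S a → d ∈ fiberOf K S b →
      d ∈ fiberOf K S a := by
    intro a b d hab hbd
    have hbK : b ∈ K := hab.1
    have hnab := hab.2
    have hdK : d ∈ K := hbd.1
    have hnbd := hbd.2
    refine ⟨hdK, fun ⟨γ, hγS, hda, hdd, hcomp⟩ => ?_⟩
    by_cases hbγ : b ∈ γ
    · -- b lies on the line, so b ∈ P and its fiber is trivial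
      have hbP : b ∈ P := hline γ hγS ⟨hbγ, hbK⟩
      have hfib := hPtriv b hbP
      have hdb : d = b := by
        have : d ∈ ({b} : Set ℂ) := hfib ▸ hbd
        simpa using this
      exact hnab ⟨γ, hγS, hda, hdb ▸ hdd, hdb ▸ hcomp⟩
    · have hbc : b ∈ γᶜ := hbγ
      by_cases hab' : connectedComponentIn γᶜ a = connectedComponentIn γᶜ b
      · exact hnbd ⟨γ, hγS, hbc, hdd, fun h => hcomp (hab'.trans h)⟩
      · exact hnab ⟨γ, hγS, hda, hbc, hab'⟩
  -- x ∈ fiber c ∩ fiber c' implies the fibers coincide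
  have hcx : c ∈ fiberOf K S x := symm c x hc hxc
  have hc'x : c' ∈ fiberOf K S x := symm c' x hc' hxc'
  have hcc' : c' ∈ fiberOf K S c := trans c x c' hxc hc'x
  have hc'c : c ∈ fiberOf K S c' := trans c' x c hxc' hcx
  ext y
  constructor
  · intro hy; exact trans c' c y hc'c hy
  · intro hy; exact trans c c' y hcc' hy
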